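/- arXiv:2411.00791 — 6 statements merged into one kernel-verified Lean document; each statement's English description precedes it below -/
import Mathlib

section
/- For every real number k with k ≥ 1/π and every real number y, one has k·y² ≥ y − sin(y). -/
/-!
For `y ≤ 0` the right-hand side is nonpositive. For `y ≥ 0` it suffices that `sin y` lies above
the parabola `y (π - y) / π` through the zeros `0` and `π` of `sin`. Both are symmetric under
`y ↦ π - y`, so on `[0, π]` we may assume `y ≤ π / 2`, where the Taylor bound
`y - y ^ 3 / 6 ≤ sin y` suffices because `π / 2 ≤ 6 / π`. For `y ≥ π`, already
`π - y ≤ sin y`, and the parabola lies below that line there.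
-/

open Real

namespace Real

variable {y : ℝ}

lemma mul_pi_sub_div_pi_le_sin_of_le_pi_div_two (hy₀ : 0 ≤ y) (hy : y ≤ π / 2) :
    y * (π - y) / π ≤ sin y := by
  have hcube : y ^ 3 / 6 ≤ y ^ 2 / π := by
    rw [div_le_div_iff₀ (by norm_num) pi_pos]
    have : π * y ≤ 6 := by nlinarith [pi_lt_d2, pi_pos]
    nlinarith [sq_nonneg y]
  calc y * (π - y) / π = y - y ^ 2 / π := by field_simp
    _ ≤ y - y ^ 3 / 6 := by linarith
    _ ≤ sin y := sin_ge_sub_cube hy₀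

lemma mul_pi_sub_div_pi_le_sin_of_le_pi (hy₀ : 0 ≤ y) (hy : y ≤ π) :
    y * (π - y) / π ≤ sin y := by
  rcases le_total y (π / 2) with hy' | hy'
  · exact mul_pi_sub_div_pi_le_sin_of_le_pi_div_two hy₀ hy'
  · have := mul_pi_sub_div_pi_le_sin_of_le_pi_div_two (y := π - y) (by linarith) (by linarith)
    rwa [sin_pi_sub, sub_sub_cancel, mul_comm] at this

lemma mul_pi_sub_div_pi_le_sin_of_pi_le (hy : π ≤ y) : y * (π - y) / π ≤ sin y := by
  have hline : π - y ≤ sin y := by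
    have := sin_le (sub_nonneg.2 hy)
    rw [sin_sub_pi] at this
    linarith
  have hgap : y * (π - y) / π = (π - y) - (π - y) ^ 2 / π := by field_simp; ring
  have : 0 ≤ (π - y) ^ 2 / π := by positivity
  linarith

lemma mul_pi_sub_div_pi_le_sin (hy₀ : 0 ≤ y) : y * (π - y) / π ≤ sin y := by
  rcases le_total y π with hy | hy
  · exact mul_pi_sub_div_pi_le_sin_of_le_pi hy₀ hy
  · exact mul_pi_sub_div_pi_le_sin_of_pi_le hy

lemma sub_sin_le_sq_div_pi (hy₀ : 0 ≤ y) : y - sin y ≤ y ^ 2 / π := by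
  have h := mul_pi_sub_div_pi_le_sin hy₀
  have : y * (π - y) / π = y - y ^ 2 / π := by field_simp
  linarith

end Real

theorem ky_sq_ge_y_sub_sin (k : ℝ) (hk : k ≥ 1 / π) (y : ℝ) :
    k * y ^ 2 ≥ y - Real.sin y := by
  have hk₀ : 0 ≤ k := le_trans (by positivity) hk
  rcases le_total 0 y with hy | hy
  · calc y - sin y ≤ y ^ 2 / π := sub_sin_le_sq_div_pi hy
      _ = 1 / π * y ^ 2 := by ring
      _ ≤ k * y ^ 2 := by gcongr
  · have : 0 ≤ k * y ^ 2 := by positivity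
    linarith [le_sin hy]
end

section
/- For every nonzero real number y, (y − sin(y))/y² ≤ 1/π, and equality holds at y = π; that is, the function p(y) = (y − sin(y))/y² attains its absolute maximum value 1/π at y = π. -/
/-!
The inequality is equivalent to the global bound `y - y ^ 2 / π ≤ sin y`. For `y ≤ 0` it follows
from `y ≤ sin y`; on `[0, π / 2]` from `y - y ^ 3 / 6 ≤ sin y`, since `y ≤ π / 2 < 6 / π`; on
`[π / 2, π]` by the symmetry `y ↦ π - y` shared by both sides; and for `y ≥ π` from
`sin y = -sin (y - π) ≥ π - y`, the gap being `(y - π) ^ 2 / π`.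
-/

open Real

namespace Real

lemma sub_sq_div_pi_le_sin_of_le_pi_div_two {x : ℝ} (h0 : 0 ≤ x) (h1 : x ≤ π / 2) :
    x - x ^ 2 / π ≤ sin x := by
  have hcube : x ^ 3 / 6 ≤ x ^ 2 / π := by
    rw [div_le_div_iff₀ (by norm_num) pi_pos]
    have : x * π ≤ 6 := by nlinarith [pi_lt_d2, pi_pos]
    nlinarith [sq_nonneg x]
  linarith [sin_ge_sub_cube h0]

lemma sub_sq_div_pi_le_sin_of_le_pi {x : ℝ} (h0 : 0 ≤ x) (h1 : x ≤ π) :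
    x - x ^ 2 / π ≤ sin x := by
  rcases le_or_gt x (π / 2) with hx | hx
  · exact sub_sq_div_pi_le_sin_of_le_pi_div_two h0 hx
  · have h := sub_sq_div_pi_le_sin_of_le_pi_div_two (x := π - x) (by linarith) (by linarith)
    rw [sin_pi_sub] at h
    calc x - x ^ 2 / π = π - x - (π - x) ^ 2 / π := by field_simp; ring
      _ ≤ sin x := h

lemma sub_sq_div_pi_le_sin_of_pi_le {x : ℝ} (hx : π ≤ x) : x - x ^ 2 / π ≤ sin x := by
  have hsin : π - x ≤ sin x := by linarith [sin_sub_pi x, sin_le (sub_nonneg.2 hx)]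
  have hgap : x - x ^ 2 / π = π - x - (x - π) ^ 2 / π := by field_simp; ring
  have : 0 ≤ (x - π) ^ 2 / π := by positivity
  linarith

lemma sub_sq_div_pi_le_sin (x : ℝ) : x - x ^ 2 / π ≤ sin x := by
  rcases le_total x 0 with hneg | hnonneg
  · have : 0 ≤ x ^ 2 / π := by positivity
    linarith [le_sin hneg]
  rcases le_total x π with hle | hge
  · exact sub_sq_div_pi_le_sin_of_le_pi hnonneg hle
  · exact sub_sq_div_pi_le_sin_of_pi_le hge

end Real

theorem p_max_at_pi :
    (∀ y : ℝ, y ≠ 0 → (y - Real.sin y) / y ^ 2 ≤ 1 / π) ∧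
    (π - Real.sin π) / π ^ 2 = 1 / π := by
  refine ⟨fun y hy => ?_, by simp [sq]⟩
  calc (y - sin y) / y ^ 2 ≤ y ^ 2 / π / y ^ 2 := by
        gcongr
        linarith [sub_sq_div_pi_le_sin y]
    _ = 1 / π := by field_simp
end

section
/- Let f : ℝ → ℝ be continuously differentiable with f(0) = 0 and f(2) = 0. Then ∫₀² f'(t)² dt ≥ (π/2)² · ∫₀² f(t)² dt. -/
/-!
Picone's argument with the weight `sin (ω t)`, `ω = π / L`, which is positive on `(0, L)`: the
function `g = ω f² cot (ω t)` satisfies `f'² - ω² f² - g' = (f' - ω f cot (ω t))² ≥ 0` there, and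
`g` tends to `0` at both endpoints because `f` and `sin (ω t)` vanish to first order there.
Integrating `g' ≤ f'² - ω² f²` over `[0, L]` gives `0 ≤ ∫ f'² - ω² ∫ f²`.
-/

open Real Filter Topology Set intervalIntegral

lemma continuousAt_sq_div_of_hasDerivAt {f h : ℝ → ℝ} {a f' h' : ℝ} (hf : HasDerivAt f f' a)
    (hh : HasDerivAt h h' a) (hfa : f a = 0) (hha : h a = 0) (hh' : h' ≠ 0) :
    ContinuousAt (fun t => f t ^ 2 / h t) a := by
  rw [← continuousWithinAt_compl_self, ContinuousWithinAt, hfa, hha, zero_pow two_ne_zero,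
    zero_div]
  rw [hasDerivAt_iff_tendsto_slope] at hf hh
  have hlim : Tendsto (fun t => slope f a t ^ 2 / slope h a t * (t - a)) (𝓝[≠] a) (𝓝 0) := by
    simpa only [sub_self, mul_zero, Pi.div_apply, id] using
      ((hf.pow 2).div hh hh').mul (tendsto_nhdsWithin_of_tendsto_nhds (tendsto_id.sub_const a))
  refine hlim.congr' (eventually_nhdsWithin_of_forall fun t ht => ?_)
  have hta : t - a ≠ 0 := sub_ne_zero.2 ht
  simp only [slope_def_field, hfa, hha, sub_zero]
  field_simp

lemma picone_deriv_le (ω x y s c : ℝ) (hsc : s ^ 2 + c ^ 2 = 1) (hs : s ≠ 0) :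
    2 * ω * x * y * (c / s) - ω ^ 2 * x ^ 2 / s ^ 2 ≤ y ^ 2 - ω ^ 2 * x ^ 2 := by
  have hsq : y ^ 2 - ω ^ 2 * x ^ 2 - (2 * ω * x * y * (c / s) - ω ^ 2 * x ^ 2 / s ^ 2)
      = (y - ω * x * (c / s)) ^ 2 := by
    field_simp
    linear_combination (-ω ^ 2 * x ^ 2) * hsc
  linarith [sq_nonneg (y - ω * x * (c / s))]

lemma hasDerivAt_picone {f : ℝ → ℝ} {f' ω t : ℝ} (hf : HasDerivAt f f' t)
    (hs : sin (ω * t) ≠ 0) :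
    HasDerivAt (fun u => ω * cos (ω * u) * (f u ^ 2 / sin (ω * u)))
      (2 * ω * f t * f' * (cos (ω * t) / sin (ω * t)) - ω ^ 2 * f t ^ 2 / sin (ω * t) ^ 2) t := by
  have hlin : HasDerivAt (fun u => ω * u) ω t := by simpa using (hasDerivAt_id t).const_mul ω
  refine ((hlin.cos.const_mul ω).mul ((hf.pow 2).div hlin.sin hs)).congr_deriv ?_
  simp only [Pi.div_apply, Pi.pow_apply]
  field_simp
  linear_combination (-ω ^ 2 * f t ^ 2) * sin_sq_add_cos_sq (ω * t)

theorem sq_mul_integral_sq_le_integral_deriv_sq {f : ℝ → ℝ} {L : ℝ} (hL : 0 < L)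
    (hf : ContDiff ℝ 1 f) (h0 : f 0 = 0) (hfL : f L = 0) :
    (π / L) ^ 2 * ∫ t in (0)..L, f t ^ 2 ≤ ∫ t in (0)..L, deriv f t ^ 2 := by
  set ω := π / L
  have hω : ω * L = π := div_mul_cancel₀ π hL.ne'
  have hderiv (t : ℝ) : HasDerivAt f (deriv f t) t :=
    (hf.differentiable one_ne_zero t).hasDerivAt
  have hsin (t : ℝ) : HasDerivAt (fun u => sin (ω * u)) (cos (ω * t) * ω) t := by
    simpa using ((hasDerivAt_id t).const_mul ω).sin
  have hsin_pos {t : ℝ} (ht : t ∈ Ioo 0 L) : 0 < sin (ω * t) := by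
    refine sin_pos_of_pos_of_lt_pi (mul_pos (by positivity) ht.1) ?_
    rw [← hω]
    exact mul_lt_mul_of_pos_left ht.2 (by positivity)
  set g := fun u => ω * cos (ω * u) * (f u ^ 2 / sin (ω * u))
  have hcos : Continuous fun u => ω * cos (ω * u) := by fun_prop
  -- At `0` and `L` the junk value `x / 0 = 0` makes `g` vanish, matching its limits there.
  have hg_cont : ContinuousOn g (Icc 0 L) := by
    intro t ht
    refine ContinuousAt.continuousWithinAt ?_
    rcases eq_or_lt_of_le ht.1 with rfl | ht0
    · exact hcos.continuousAt.mul <| continuousAt_sq_div_of_hasDerivAt (hderiv 0) (hsin 0) h0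
        (by simp) (by simp; positivity)
    rcases eq_or_lt_of_le ht.2 with rfl | htL
    · exact hcos.continuousAt.mul <| continuousAt_sq_div_of_hasDerivAt (hderiv t) (hsin t) hfL
        (by simp [hω]) (by simp [hω]; positivity)
    · exact (hasDerivAt_picone (hderiv t) (hsin_pos ⟨ht0, htL⟩).ne').continuousAt
  have hf'_sq : Continuous fun t => deriv f t ^ 2 := (hf.continuous_deriv le_rfl).pow 2
  have hf_sq : Continuous fun t => ω ^ 2 * f t ^ 2 := continuous_const.mul (hf.continuous.pow 2)
  have key : g L - g 0 ≤ ∫ t in (0)..L, (deriv f t ^ 2 - ω ^ 2 * f t ^ 2) :=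
    sub_le_integral_of_hasDeriv_right_of_le hL.le hg_cont
      (fun t ht => (hasDerivAt_picone (hderiv t) (hsin_pos ht).ne').hasDerivWithinAt)
      (hf'_sq.sub hf_sq).integrableOn_Icc
      (fun t ht => picone_deriv_le _ _ _ _ _ (sin_sq_add_cos_sq _) (hsin_pos ht).ne')
  rw [integral_sub (hf'_sq.intervalIntegrable _ _) (hf_sq.intervalIntegrable _ _),
    integral_const_mul] at key
  simp only [g, hω, cos_pi, cos_zero, sin_pi, sin_zero, div_zero, mul_zero, sub_self,
    sub_nonneg] at key
  exact key

theorem poincare_on_zero_two (f : ℝ → ℝ) (hf : ContDiff ℝ 1 f)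
    (h0 : f 0 = 0) (h2 : f 2 = 0) :
    ∫ t in (0:ℝ)..2, (deriv f t) ^ 2 ≥ (π / 2) ^ 2 * ∫ t in (0:ℝ)..2, (f t) ^ 2 :=
  sq_mul_integral_sq_le_integral_deriv_sq two_pos hf h0 h2
end

section
/- Fix a ≥ 0 and a continuously differentiable function g : ℝ → ℝ. Suppose F : ℝ → ℝ is twice continuously differentiable with F(0) = 0 and F'(1) = 0, and suppose F minimizes S(·, g): for every continuously differentiable f : ℝ → ℝ with f(0) = 0 and f'(1) = 0 one has S(F, g) ≤ S(f, g). Then F''(t) = −(a/2)·cos(F(t) − g(t)) for every t in the open interval (0,1). -/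
open Real intervalIntegral

/-- The payoff functional of the game: `S a u v = ∫₀¹ (u'² − v'² − a·sin(u − v))`. -/
noncomputable def gameS (a : ℝ) (u v : ℝ → ℝ) : ℝ :=
  ∫ t in (0:ℝ)..1, ((deriv u t) ^ 2 - (deriv v t) ^ 2 - a * Real.sin (u t - v t))

open MeasureTheory Metric Set
open scoped ContDiff

/-! Perturbing `F` by `x φ` for an admissible `φ` keeps it admissible, so `x ↦ S(F + x φ, g)`
is minimal at `0`. Differentiating under the integral sign and integrating `F' φ'` by parts (the
boundary terms vanish because `F'(1) = 0 = φ(0)`) gives `∫₀¹ (2 F'' + a cos (F - g)) φ = 0`.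
Smooth functions supported in `(0, 1)` are admissible, so by the fundamental lemma of the calculus
of variations the continuous function `2 F'' + a cos (F - g)` vanishes on `(0, 1)`. -/

theorem hasDerivAt_intervalIntegral_of_continuous_uncurry {E : Type*} [NormedAddCommGroup E]
    [NormedSpace ℝ E] {G G' : ℝ → ℝ → E} {a b x₀ : ℝ}
    (hG : Continuous (Function.uncurry G)) (hG' : Continuous (Function.uncurry G'))
    (hderiv : ∀ x t, HasDerivAt (G · t) (G' x t) x) :
    HasDerivAt (fun x => ∫ t in a..b, G x t) (∫ t in a..b, G' x₀ t) x₀ := by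
  obtain ⟨C, hC⟩ := (isCompact_closedBall x₀ 1 |>.prod isCompact_uIcc)
    |>.exists_bound_of_continuousOn hG'.continuousOn
  have hGx : ∀ x, Continuous (G x) := fun x => hG.comp (Continuous.prodMk_right x)
  refine (hasDerivAt_integral_of_dominated_loc_of_deriv_le (bound := fun _ => C)
    (ball_mem_nhds x₀ one_pos) (.of_forall fun x => (hGx x).aestronglyMeasurable)
    ((hGx x₀).intervalIntegrable a b)
    (hG'.comp (Continuous.prodMk_right x₀)).aestronglyMeasurable ?_ intervalIntegrable_const
    (.of_forall fun t _ x _ => hderiv x t)).2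
  exact .of_forall fun t ht x hx => hC (x, t) ⟨ball_subset_closedBall hx, uIoc_subset_uIcc ht⟩

theorem eqOn_zero_of_intervalIntegral_mul_eq_zero {E : ℝ → ℝ} {a b : ℝ} (hE : Continuous E)
    (h : ∀ φ : ℝ → ℝ, ContDiff ℝ ∞ φ → tsupport φ ⊆ Ioo a b →
      ∫ t in a..b, E t * φ t = 0) :
    EqOn E 0 (Ioo a b) := by
  rcases le_or_gt b a with hba | hab
  · simp [Ioo_eq_empty_of_le hba]
  have hae : ∀ᵐ t ∂volume, t ∈ Ioo a b → E t = 0 := by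
    refine isOpen_Ioo.ae_eq_zero_of_integral_contDiff_smul_eq_zero
      (hE.locallyIntegrable.locallyIntegrableOn _) fun φ hφ _ hsupp => ?_
    have hzero : ∀ t ∉ Ioc a b, E t * φ t = 0 := fun t ht => by
      rw [image_eq_zero_of_notMem_tsupport fun h' => ht (Ioo_subset_Ioc_self (hsupp h')), mul_zero]
    rw [← h φ hφ hsupp, integral_of_le hab.le,
      setIntegral_eq_integral_of_forall_compl_eq_zero hzero]
    simp only [smul_eq_mul, mul_comm]
  exact volume.eqOn_open_of_ae_eq ((ae_restrict_iff' measurableSet_Ioo).2 hae) isOpen_Ioo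
    hE.continuousOn continuousOn_const

theorem hasDerivAt_gameS_add_mul (a : ℝ) {F φ g : ℝ → ℝ} (hF : ContDiff ℝ 1 F)
    (hφ : ContDiff ℝ 1 φ) (hg : ContDiff ℝ 1 g) :
    HasDerivAt (fun x => gameS a (fun t => F t + x * φ t) g)
      (∫ t in (0:ℝ)..1, (2 * deriv F t * deriv φ t - a * cos (F t - g t) * φ t)) 0 := by
  have hFd := hF.differentiable one_ne_zero
  have hφd := hφ.differentiable one_ne_zero
  have hderiv_add : ∀ x t, deriv (fun t => F t + x * φ t) t = deriv F t + x * deriv φ t :=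
    fun x t => by rw [deriv_fun_add (hFd t) ((hφd t).const_mul x), deriv_const_mul x (hφd t)]
  have hpartial : ∀ x t, HasDerivAt
      (fun x => (deriv F t + x * deriv φ t) ^ 2 - deriv g t ^ 2 - a * sin (F t + x * φ t - g t))
      (2 * (deriv F t + x * deriv φ t) * deriv φ t - a * cos (F t + x * φ t - g t) * φ t)
      x := by
    intro x t
    have hlin : ∀ c d : ℝ, HasDerivAt (fun x => c + x * d) d x := fun c d => by
      simpa using ((hasDerivAt_id x).mul_const d).const_add c
    refine ((((hlin (deriv F t) (deriv φ t)).pow 2).sub_const (deriv g t ^ 2)).sub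
      (((hlin (F t) (φ t)).sub_const (g t)).sin.const_mul a)).congr_deriv ?_
    norm_num
    ring
  simp only [gameS, hderiv_add]
  simpa using hasDerivAt_intervalIntegral_of_continuous_uncurry (x₀ := 0) (by fun_prop)
    (by fun_prop) hpartial

theorem integral_eulerLagrange_mul_eq_zero {a : ℝ} {g F φ : ℝ → ℝ} (hg : ContDiff ℝ 1 g)
    (hF : ContDiff ℝ 2 F) (hF0 : F 0 = 0) (hF1 : deriv F 1 = 0)
    (hmin : ∀ f : ℝ → ℝ, ContDiff ℝ 1 f → f 0 = 0 → deriv f 1 = 0 →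
      gameS a F g ≤ gameS a f g)
    (hφ : ContDiff ℝ 1 φ) (hφ0 : φ 0 = 0) (hφ1 : deriv φ 1 = 0) :
    ∫ t in (0:ℝ)..1, (2 * deriv (deriv F) t + a * cos (F t - g t)) * φ t = 0 := by
  have hF₁ : ContDiff ℝ 1 F := hF.of_le one_le_two
  have hF' : ContDiff ℝ 1 (deriv F) := hF.deriv'
  have hFd := hF₁.differentiable one_ne_zero
  have hφd := hφ.differentiable one_ne_zero
  have hF'' := hF'.continuous_deriv le_rfl
  have hφ' := hφ.continuous_deriv le_rfl
  have hlocal_min : IsLocalMin (fun x => gameS a (fun t => F t + x * φ t) g) 0 := by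
    refine .of_forall fun x => ?_
    have hderiv_one : deriv (fun t => F t + x * φ t) 1 = 0 := by
      rw [deriv_fun_add (hFd 1) ((hφd 1).const_mul x), deriv_const_mul x (hφd 1), hF1, hφ1,
        mul_zero, add_zero]
    simpa using hmin _ (by fun_prop) (by simp [hF0, hφ0]) hderiv_one
  have hfirst_variation :
      ∫ t in (0:ℝ)..1, (2 * deriv F t * deriv φ t - a * cos (F t - g t) * φ t) = 0 :=
    hlocal_min.hasDerivAt_eq_zero (hasDerivAt_gameS_add_mul a hF₁ hφ hg)
  have hparts : ∫ t in (0:ℝ)..1, deriv F t * deriv φ t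
      = -∫ t in (0:ℝ)..1, deriv (deriv F) t * φ t := by
    rw [integral_mul_deriv_eq_deriv_mul (fun t _ => (hF'.differentiable one_ne_zero t).hasDerivAt)
      (fun t _ => (hφd t).hasDerivAt) (hF''.intervalIntegrable _ _) (hφ'.intervalIntegrable _ _),
      hF1, hφ0]
    ring
  have hint : ∀ {f : ℝ → ℝ}, Continuous f → IntervalIntegrable f volume 0 1 :=
    fun hf => hf.intervalIntegrable _ _
  calc ∫ t in (0:ℝ)..1, (2 * deriv (deriv F) t + a * cos (F t - g t)) * φ t
      = 2 * (∫ t in (0:ℝ)..1, deriv (deriv F) t * φ t)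
          + ∫ t in (0:ℝ)..1, a * cos (F t - g t) * φ t := by
        rw [← intervalIntegral.integral_const_mul,
          ← integral_add (hint (by fun_prop)) (hint (by fun_prop))]
        congr 1 with t
        ring
    _ = -(2 * (∫ t in (0:ℝ)..1, deriv F t * deriv φ t)
          - ∫ t in (0:ℝ)..1, a * cos (F t - g t) * φ t) := by
        rw [hparts]
        ring
    _ = -∫ t in (0:ℝ)..1, (2 * (deriv F t * deriv φ t) - a * cos (F t - g t) * φ t) := by
        rw [integral_sub (hint (by fun_prop)) (hint (by fun_prop)),
          intervalIntegral.integral_const_mul]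
    _ = 0 := by simp only [← mul_assoc, hfirst_variation, neg_zero]

theorem euler_lagrange_of_minimizer_general (a : ℝ)
    (g : ℝ → ℝ) (hg : ContDiff ℝ 1 g)
    (F : ℝ → ℝ) (hF : ContDiff ℝ 2 F) (hF0 : F 0 = 0) (hF1 : deriv F 1 = 0)
    (hmin : ∀ f : ℝ → ℝ, ContDiff ℝ 1 f → f 0 = 0 → deriv f 1 = 0 →
      gameS a F g ≤ gameS a f g) :
    ∀ t ∈ Set.Ioo (0:ℝ) 1,
      deriv (deriv F) t = -(a / 2) * Real.cos (F t - g t) := by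
  have hresidual : EqOn (fun t => 2 * deriv (deriv F) t + a * cos (F t - g t)) 0 (Ioo 0 1) := by
    refine eqOn_zero_of_intervalIntegral_mul_eq_zero (by fun_prop) fun φ hφ hsupp => ?_
    have h0 : (0:ℝ) ∉ tsupport φ := fun h => (hsupp h).1.false
    have h1 : (1:ℝ) ∉ tsupport φ := fun h => (hsupp h).2.false
    exact integral_eulerLagrange_mul_eq_zero hg hF hF0 hF1 hmin (hφ.of_le (by simp))
      (image_eq_zero_of_notMem_tsupport h0) (deriv_of_notMem_tsupport h1)
  intro t ht
  have hzero := hresidual ht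
  simp only [Pi.zero_apply] at hzero
  linarith

theorem euler_lagrange_of_minimizer (a : ℝ) (ha : 0 ≤ a)
    (g : ℝ → ℝ) (hg : ContDiff ℝ 1 g)
    (F : ℝ → ℝ) (hF : ContDiff ℝ 2 F) (hF0 : F 0 = 0) (hF1 : deriv F 1 = 0)
    (hmin : ∀ f : ℝ → ℝ, ContDiff ℝ 1 f → f 0 = 0 → deriv f 1 = 0 →
      gameS a F g ≤ gameS a f g) :
    ∀ t ∈ Set.Ioo (0:ℝ) 1,
      deriv (deriv F) t = -(a / 2) * Real.cos (F t - g t) :=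
  euler_lagrange_of_minimizer_general a g hg F hF hF0 hF1 hmin
end

section
/- Fix a real number a. For every continuously differentiable f : ℝ → ℝ with f(0) = 0, one has ∫₀¹ (f'(t)² − a·f(t)) dt ≥ −a²/12, with equality when f(t) = (a/4)·t·(2 − t). That is, F(t) = (a/4)·t·(2 − t) is the absolute minimizer of the linearized functional among admissible functions. -/
/-! Integrating by parts against `1 - t` turns the linear term into `∫₀¹ a (1 - t) f'(t) dt`, so
completing the square gives
`∫₀¹ (f'² - a f) = ∫₀¹ (f' - (a/2)(1 - t))² - a²/12`.
The right-hand side is at least `-a²/12`, with equality exactly when `f' = (a/2)(1 - t)`, which is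
the derivative of `(a/4) t (2 - t)`. -/

open Real intervalIntegral

theorem integral_one_sub_mul_deriv_eq_integral {f f' : ℝ → ℝ} (h0 : f 0 = 0)
    (hf : ∀ t ∈ Set.uIcc (0 : ℝ) 1, HasDerivAt f (f' t) t)
    (hf' : IntervalIntegrable f' MeasureTheory.volume 0 1) :
    ∫ t in (0 : ℝ)..1, (1 - t) * f' t = ∫ t in (0 : ℝ)..1, f t := by
  have hu : ∀ t ∈ Set.uIcc (0 : ℝ) 1, HasDerivAt (fun t : ℝ => 1 - t) (-1) t :=
    fun t _ => (hasDerivAt_id' t).const_sub 1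
  rw [integral_mul_deriv_eq_deriv_mul hu hf intervalIntegrable_const hf', h0]
  simp

theorem integral_one_sub_sq : ∫ t in (0 : ℝ)..1, (1 - t) ^ 2 = 1 / 3 := by
  simp [integral_comp_sub_left (fun x : ℝ => x ^ 2)]
  norm_num

theorem integral_deriv_sq_sub_mul_eq (a : ℝ) {f : ℝ → ℝ} (hf : ContDiff ℝ 1 f) (h0 : f 0 = 0) :
    ∫ t in (0 : ℝ)..1, (deriv f t ^ 2 - a * f t) =
      (∫ t in (0 : ℝ)..1, (deriv f t - a / 2 * (1 - t)) ^ 2) - a ^ 2 / 12 := by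
  have hf' : Continuous (deriv f) := hf.continuous_deriv le_rfl
  have hparts := integral_one_sub_mul_deriv_eq_integral h0
    (fun t _ => (hf.differentiable one_ne_zero t).hasDerivAt) (hf'.intervalIntegrable 0 1)
  have hsq : IntervalIntegrable (fun t => deriv f t ^ 2) MeasureTheory.volume 0 1 :=
    (hf'.pow 2).intervalIntegrable 0 1
  have hcross : IntervalIntegrable (fun t => a * ((1 - t) * deriv f t)) MeasureTheory.volume 0 1 :=
    (by fun_prop : Continuous fun t => a * ((1 - t) * deriv f t)).intervalIntegrable 0 1
  have hweight : IntervalIntegrable (fun t : ℝ => a ^ 2 / 4 * (1 - t) ^ 2) MeasureTheory.volume 0 1 :=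
    (by fun_prop : Continuous fun t : ℝ => a ^ 2 / 4 * (1 - t) ^ 2).intervalIntegrable 0 1
  have hexpand : ∫ t in (0 : ℝ)..1, (deriv f t - a / 2 * (1 - t)) ^ 2 =
      (∫ t in (0 : ℝ)..1, deriv f t ^ 2) - a * (∫ t in (0 : ℝ)..1, (1 - t) * deriv f t)
        + a ^ 2 / 4 * ∫ t in (0 : ℝ)..1, (1 - t) ^ 2 := by
    rw [← integral_const_mul, ← integral_const_mul, ← integral_sub hsq hcross,
      ← integral_add (hsq.sub hcross) hweight]
    congr 1 with t
    ring
  rw [hexpand, hparts, integral_one_sub_sq,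
    integral_sub hsq ((hf.continuous.const_mul a).intervalIntegrable 0 1), integral_const_mul]
  ring

theorem hasDerivAt_minimizer (a t : ℝ) :
    HasDerivAt (fun t : ℝ => (a / 4) * t * (2 - t)) (a / 2 * (1 - t)) t :=
  (((hasDerivAt_id' t).const_mul (a / 4)).mul ((hasDerivAt_id' t).const_sub 2)).congr_deriv
    (by ring)

theorem linearized_functional_minimizer (a : ℝ) :
    (∀ f : ℝ → ℝ, ContDiff ℝ 1 f → f 0 = 0 →
      ∫ t in (0:ℝ)..1, ((deriv f t) ^ 2 - a * f t) ≥ -a ^ 2 / 12) ∧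
    (∫ t in (0:ℝ)..1,
        ((deriv (fun t : ℝ => (a / 4) * t * (2 - t)) t) ^ 2
          - a * ((a / 4) * t * (2 - t))) = -a ^ 2 / 12) := by
  refine ⟨fun f hf h0 => ?_, ?_⟩
  · rw [ge_iff_le, integral_deriv_sq_sub_mul_eq a hf h0]
    have : 0 ≤ ∫ t in (0 : ℝ)..1, (deriv f t - a / 2 * (1 - t)) ^ 2 :=
      integral_nonneg zero_le_one fun t _ => sq_nonneg _
    linarith
  · have hF : ContDiff ℝ 1 fun t : ℝ => (a / 4) * t * (2 - t) := by fun_prop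
    rw [integral_deriv_sq_sub_mul_eq a hF (by simp)]
    simp [(hasDerivAt_minimizer a _).deriv, neg_div]
end

section
/- Fix a with 0 ≤ a ≤ π³/4 and let f(t) = (a/4)·t·(2 − t). Then for every continuously differentiable g : ℝ → ℝ with g(0) = 0 and g'(1) = 0, one has S(g, f) ≥ 0 = S(f, f). In other words, the pure strategy f is a Nash equilibrium of the game: no admissible deviation by either player improves their payoff. -/
/-!
Write `g = f + p`. Since `f' = a (1 - t) / 2` solves the Euler–Lagrange equation `2 f'' + a = 0`
with the natural boundary condition `f'(1) = 0`, the part of `S(g, f)` linear in `p` is the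
derivative of `a (1 - t) p`, which vanishes at both ends; hence
`S(g, f) = ∫₀¹ (p'² + a (p - sin p))`. The elementary bound `sin u - u ≤ u² / π` and `a ≤ π³ / 4`
give `a (p - sin p) ≥ -(π / 2)² p²`, and `∫₀¹ p'² ≥ (π / 2)² ∫₀¹ p²` for `p 0 = 0` is Wirtinger's
inequality, proved via Picone's identity with the weight `(π / 2) cot (π t / 2)` and a limit
at its pole `t = 0`.
-/

open Real intervalIntegral

open Filter Topology Set

theorem sub_sin_le_sq_div_pi_of_le_pi_div_two {y : ℝ} (hy0 : 0 ≤ y) (hy : y ≤ π / 2) :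
    y - sin y ≤ y ^ 2 / π := by
  have hyπ : y * π ≤ 6 := by nlinarith [pi_lt_d2, pi_pos]
  have hcube : y ^ 3 / 6 ≤ y ^ 2 / π := by
    rw [div_le_div_iff₀ (by norm_num) pi_pos]
    nlinarith [mul_nonneg (sq_nonneg y) (sub_nonneg.2 hyπ)]
  linarith [sin_ge_sub_cube hy0]

/-- The constant `1 / π` is sharp: equality holds at `x = -π`. -/
theorem sin_sub_le_sq_div_pi (x : ℝ) : sin x - x ≤ x ^ 2 / π := by
  rcases le_or_gt 0 x with hx | hx
  · linarith [sin_le hx, (by positivity : 0 ≤ x ^ 2 / π)]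
  obtain ⟨y, rfl⟩ : ∃ y, x = -y := ⟨-x, (neg_neg x).symm⟩
  rw [sin_neg, neg_sq]
  have hy : 0 < y := neg_neg_iff_pos.1 hx
  rcases le_or_gt y (π / 2) with hy1 | hy1
  · linarith [sub_sin_le_sq_div_pi_of_le_pi_div_two hy.le hy1]
  rcases le_or_gt y π with hy2 | hy2
  · -- `y ↦ y ^ 2 / π - y + sin y` is symmetric about `π / 2`
    have h := sub_sin_le_sq_div_pi_of_le_pi_div_two (y := π - y) (by linarith) (by linarith)
    have hsq : (π - y) ^ 2 / π = π - 2 * y + y ^ 2 / π := by field_simp; ring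
    rw [sin_pi_sub, hsq] at h
    linarith
  · have hsin : -(y - π) ≤ sin y := by linarith [sin_sub_pi y, sin_le (by linarith : 0 ≤ y - π)]
    have hsq : y ^ 2 / π - (2 * y - π) = (y - π) ^ 2 / π := by field_simp; ring
    linarith [(by positivity : 0 ≤ (y - π) ^ 2 / π)]

/-- Picone's identity: `p' ^ 2 - k ^ 2 * p ^ 2 - (w * p ^ 2)' = (p' - w * p) ^ 2` when
`w' = -(k ^ 2 + w ^ 2)`. -/
theorem le_integral_deriv_sq_sub_sq_of_riccati {k x y : ℝ} {w p : ℝ → ℝ} (hxy : x ≤ y)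
    (hw : ∀ t ∈ Icc x y, HasDerivAt w (-(k ^ 2 + w t ^ 2)) t) (hp : ContDiff ℝ 1 p) :
    w y * p y ^ 2 - w x * p x ^ 2 ≤ ∫ t in x..y, (deriv p t ^ 2 - k ^ 2 * p t ^ 2) := by
  have hpd (t : ℝ) : HasDerivAt p (deriv p t) t :=
    (hp.differentiable one_ne_zero t).hasDerivAt
  have hp' : Continuous (deriv p) := hp.continuous_deriv le_rfl
  have hwc : ContinuousOn w (Icc x y) := fun t ht => (hw t ht).continuousAt.continuousWithinAt
  set D := fun t => -(k ^ 2 + w t ^ 2) * p t ^ 2 + w t * (2 * p t * deriv p t)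
  have hD : ∀ t ∈ uIcc x y, HasDerivAt (fun t => w t * p t ^ 2) (D t) t := by
    intro t ht
    rw [uIcc_of_le hxy] at ht
    exact ((hw t ht).mul ((hpd t).pow 2)).congr_deriv (by simp [D])
  have hDc : ContinuousOn D (uIcc x y) := by
    rw [uIcc_of_le hxy]
    have := hp.continuous.continuousOn (s := Icc x y)
    have := hp'.continuousOn (s := Icc x y)
    fun_prop
  rw [← integral_eq_sub_of_hasDerivAt hD hDc.intervalIntegrable]
  have hc : Continuous fun t => deriv p t ^ 2 - k ^ 2 * p t ^ 2 := by
    have := hp.continuous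
    fun_prop
  refine integral_mono_on hxy hDc.intervalIntegrable (hc.intervalIntegrable x y) fun t _ => ?_
  nlinarith [sq_nonneg (deriv p t - w t * p t)]

theorem hasDerivAt_mul_cot {k t : ℝ} (h : sin (k * t) ≠ 0) :
    HasDerivAt (fun t => k * (cos (k * t) / sin (k * t)))
      (-(k ^ 2 + (k * (cos (k * t) / sin (k * t))) ^ 2)) t := by
  have hlin : HasDerivAt (fun t => k * t) k t := by simpa using (hasDerivAt_id t).const_mul k
  refine ((hlin.cos.div hlin.sin h).const_mul k).congr_deriv ?_
  field_simp
  nlinarith [sin_sq_add_cos_sq (k * t)]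

theorem tendsto_sq_div_nhdsGT_zero {p : ℝ → ℝ} {d : ℝ} (hp : HasDerivAt p d 0) (hp0 : p 0 = 0) :
    Tendsto (fun x => p x ^ 2 / x) (𝓝[>] 0) (𝓝 0) := by
  have hslope : Tendsto (fun x => x⁻¹ * p x) (𝓝[>] 0) (𝓝 d) := by
    simpa [hp0] using hp.tendsto_slope_zero_right
  have hval : Tendsto p (𝓝[>] 0) (𝓝 0) := by
    simpa [hp0] using hp.continuousAt.tendsto.mono_left (nhdsWithin_le_nhds (s := Ioi 0))
  simpa [div_eq_inv_mul, sq, mul_left_comm] using hval.mul hslope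

theorem integral_sq_le_integral_deriv_sq {p : ℝ → ℝ} (hp : ContDiff ℝ 1 p) (hp0 : p 0 = 0) :
    ∫ t in (0:ℝ)..1, (π / 2) ^ 2 * p t ^ 2 ≤ ∫ t in (0:ℝ)..1, deriv p t ^ 2 := by
  set F := fun t => deriv p t ^ 2 - (π / 2) ^ 2 * p t ^ 2
  have hp' : Continuous (deriv p) := hp.continuous_deriv le_rfl
  have hF : Continuous F := by have := hp.continuous; fun_prop
  -- Picone with `w t = (π / 2) cot (π t / 2)`, which vanishes at `1` and is at most `π / (2 t)`
  have hbound : ∀ x ∈ Ioc (0:ℝ) 1, -(π / 2 * (p x ^ 2 / x)) ≤ ∫ t in x..1, F t := by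
    rintro x ⟨hx0, hx1⟩
    have hsin : ∀ t ∈ Icc x 1, 0 < sin (π / 2 * t) := fun t ht =>
      sin_pos_of_pos_of_lt_pi (by nlinarith [pi_pos, ht.1]) (by nlinarith [pi_pos, ht.2])
    have h := le_integral_deriv_sq_sub_sq_of_riccati hx1
      (fun t ht => hasDerivAt_mul_cot (hsin t ht).ne') hp
    have hcot : cos (π / 2 * x) / sin (π / 2 * x) ≤ 1 / x := by
      rw [div_le_div_iff₀ (hsin x ⟨le_rfl, hx1⟩) hx0]
      nlinarith [cos_le_one (π / 2 * x), mul_le_sin (x := π / 2 * x) (by positivity)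
        (by nlinarith [pi_pos]), pi_pos, div_mul_cancel₀ (2 : ℝ) pi_ne_zero]
    have hwx : π / 2 * (cos (π / 2 * x) / sin (π / 2 * x)) * p x ^ 2 ≤ π / 2 * (p x ^ 2 / x) :=
      calc _ ≤ π / 2 * (1 / x) * p x ^ 2 := by gcongr
        _ = π / 2 * (p x ^ 2 / x) := by ring
    rw [show π / 2 * 1 = π / 2 by ring, cos_pi_div_two, zero_div, mul_zero, zero_mul] at h
    linarith
  have hleft : Tendsto (fun x => -(π / 2 * (p x ^ 2 / x))) (𝓝[>] 0) (𝓝 0) := by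
    simpa using ((tendsto_sq_div_nhdsGT_zero
      (hp.differentiable one_ne_zero 0).hasDerivAt hp0).const_mul (π / 2)).neg
  have hright : Tendsto (fun x => ∫ t in x..1, F t) (𝓝[>] 0) (𝓝 (∫ t in (0:ℝ)..1, F t)) := by
    have hcont : Continuous fun x => ∫ t in x..1, F t := by
      simp_rw [integral_symm 1]
      exact (continuous_primitive (fun a b => hF.intervalIntegrable a b) 1).neg
    exact (hcont.tendsto 0).mono_left nhdsWithin_le_nhds
  have hnonneg := le_of_tendsto_of_tendsto hleft hright
    (eventually_of_mem (Ioc_mem_nhdsGT zero_lt_one) hbound)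
  have hsq : Continuous fun t => (π / 2) ^ 2 * p t ^ 2 := by have := hp.continuous; fun_prop
  have hsq' : Continuous fun t => deriv p t ^ 2 := by fun_prop
  rwa [integral_sub (hsq'.intervalIntegrable 0 1) (hsq.intervalIntegrable 0 1),
    sub_nonneg] at hnonneg

theorem integral_deriv_sq_add_mul_sub_sin_nonneg {a : ℝ} (ha0 : 0 ≤ a) (ha : a ≤ π ^ 3 / 4)
    {p : ℝ → ℝ} (hp : ContDiff ℝ 1 p) (hp0 : p 0 = 0) :
    0 ≤ ∫ t in (0:ℝ)..1, (deriv p t ^ 2 + a * (p t - sin (p t))) := by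
  have hpoint (u : ℝ) : -((π / 2) ^ 2 * u ^ 2) ≤ a * (u - sin u) := by
    have h1 : a * (sin u - u) ≤ a * (u ^ 2 / π) :=
      mul_le_mul_of_nonneg_left (sin_sub_le_sq_div_pi u) ha0
    have h2 : a * (u ^ 2 / π) ≤ π ^ 3 / 4 * (u ^ 2 / π) := by gcongr
    have h3 : π ^ 3 / 4 * (u ^ 2 / π) = (π / 2) ^ 2 * u ^ 2 := by field_simp; ring
    linarith
  have hp' : Continuous (deriv p) := hp.continuous_deriv le_rfl
  have hsq : Continuous fun t => (π / 2) ^ 2 * p t ^ 2 := by have := hp.continuous; fun_prop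
  have hsq' : Continuous fun t => deriv p t ^ 2 := by fun_prop
  have hint : Continuous fun t => deriv p t ^ 2 + a * (p t - sin (p t)) := by
    have := hp.continuous; fun_prop
  calc (0:ℝ) ≤ (∫ t in (0:ℝ)..1, deriv p t ^ 2) - ∫ t in (0:ℝ)..1, (π / 2) ^ 2 * p t ^ 2 :=
        sub_nonneg.2 (integral_sq_le_integral_deriv_sq hp hp0)
    _ = ∫ t in (0:ℝ)..1, (deriv p t ^ 2 - (π / 2) ^ 2 * p t ^ 2) :=
        (integral_sub (hsq'.intervalIntegrable 0 1) (hsq.intervalIntegrable 0 1)).symm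
    _ ≤ ∫ t in (0:ℝ)..1, (deriv p t ^ 2 + a * (p t - sin (p t))) :=
        integral_mono_on zero_le_one ((hsq'.sub hsq).intervalIntegrable 0 1)
          (hint.intervalIntegrable 0 1) fun t _ => by linarith [hpoint (p t)]

theorem gameS_eq_integral_deriv_sq_add_mul_sub_sin {a : ℝ} {f g : ℝ → ℝ}
    (hf : ∀ t, HasDerivAt f (a / 2 * (1 - t)) t) (hg : ContDiff ℝ 1 g) (hg0 : g 0 = f 0) :
    gameS a g f = ∫ t in (0:ℝ)..1, (deriv (g - f) t ^ 2 + a * ((g - f) t - sin ((g - f) t))) := by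
  set p := g - f
  have hgd (t : ℝ) : HasDerivAt g (deriv g t) t := (hg.differentiable one_ne_zero t).hasDerivAt
  have hpd (t : ℝ) : HasDerivAt p (deriv g t - a / 2 * (1 - t)) t := (hgd t).sub (hf t)
  have hg' : Continuous (deriv g) := hg.continuous_deriv le_rfl
  have hpc : Continuous p :=
    hg.continuous.sub (continuous_iff_continuousAt.2 fun t => (hf t).continuousAt)
  set B := fun t => a * (1 - t) * (deriv g t - a / 2 * (1 - t)) - a * p t
  have hBc : Continuous B := by fun_prop
  have hB : ∫ t in (0:ℝ)..1, B t = 0 := by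
    have hbd (t : ℝ) : HasDerivAt (fun t => a * (1 - t) * p t) (B t) t := by
      have := ((hasDerivAt_id t).const_sub 1).const_mul a |>.mul (hpd t)
      exact this.congr_deriv (by simp only [B, id]; ring)
    rw [integral_eq_sub_of_hasDerivAt (fun t _ => hbd t) (hBc.intervalIntegrable 0 1)]
    simp [p, hg0]
  set A := fun t => deriv p t ^ 2 + a * (p t - sin (p t))
  have hAc : Continuous A := by
    have hp' : deriv p = fun t => deriv g t - a / 2 * (1 - t) := funext fun t => (hpd t).deriv
    simp only [A, hp']
    fun_prop
  calc gameS a g f = ∫ t in (0:ℝ)..1, (A t + B t) := by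
        unfold gameS
        congr 1
        funext t
        simp only [A, B, (hpd t).deriv, (hf t).deriv, p, Pi.sub_apply]
        ring
    _ = ∫ t in (0:ℝ)..1, A t := by
        rw [integral_add (hAc.intervalIntegrable 0 1) (hBc.intervalIntegrable 0 1), hB, add_zero]

theorem nash_equilibrium_small_a (a : ℝ) (ha0 : 0 ≤ a) (ha : a ≤ π ^ 3 / 4)
    (f : ℝ → ℝ) (hf : f = fun t => (a / 4) * t * (2 - t)) :
    (∀ g : ℝ → ℝ, ContDiff ℝ 1 g → g 0 = 0 → deriv g 1 = 0 →
      gameS a g f ≥ 0) ∧ gameS a f f = 0 := by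
  have hf' (t : ℝ) : HasDerivAt f (a / 2 * (1 - t)) t := by
    subst hf
    exact (((hasDerivAt_id t).const_mul (a / 4)).mul ((hasDerivAt_id t).const_sub 2)).congr_deriv
      (by simp; ring)
  have hfc : ContDiff ℝ 1 f := by subst hf; fun_prop
  refine ⟨fun g hg hg0 _ => ?_, by simp [gameS]⟩
  have hfg : g 0 = f 0 := by simp [hf, hg0]
  rw [gameS_eq_integral_deriv_sq_add_mul_sub_sin hf' hg hfg, ge_iff_le]
  exact integral_deriv_sq_add_mul_sub_sin_nonneg ha0 ha (hg.sub hfc) (by simp [hfg])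
end
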